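/- Let v ∈ ℝⁿ \ {0} with δ = |v·e₁|/|v| < 1, and set λ₁ = (1−δ)/(16√2). Then for every t ∈ ℝ with |t| ≥ 1, every x ∈ ℝⁿ with |x| ≤ 4λ₁|v|⟨t⟩, and every ν ∈ [0,1], one has |x + v t + e₁ t²/2| ≥ c₁^{ν} c₂^{1−ν} |v|^{ν} |t|^{2−ν}, where c₁ = √(2(1−δ²))/2 and c₂ = √(2(1−δ²))/(3+δ). -/

import Mathlib

/-!
Write `y = t • v + (t² / 2) • e₁`. Since `|⟪v, e₁⟫| = δ‖v‖`, the Gram form of the two summands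
gives `‖y‖² ≥ A² - 2δAB + B²` with `A = |t|‖v‖`, `B = t²/2`. By Cauchy–Schwarz for this form,
`‖y‖ ≥ αA + βB` whenever `α² + 2δαβ + β² ≤ 1 - δ²`; both `(α, β) = ((1-δ)/4 + c₁, 0)` and
`((1-δ)/4, 2c₂)` qualify. As `⟨t⟩ ≤ √2 |t|`, the perturbation `x` costs at most `(1-δ)A/4`, so
`‖x + y‖` dominates both `c₁A` and `c₂t²`, hence also their weighted geometric mean.
-/

open scoped InnerProductSpace

theorem sq_add_mul_le_quadratic_form {δ α β A B : ℝ} (hδ : |δ| < 1)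
    (hαβ : α ^ 2 + 2 * δ * α * β + β ^ 2 ≤ 1 - δ ^ 2) :
    (α * A + β * B) ^ 2 ≤ A ^ 2 - 2 * δ * A * B + B ^ 2 := by
  have hδ2 : δ ^ 2 < 1 := (sq_lt_one_iff_abs_lt_one δ).2 hδ
  have hQ : 0 ≤ A ^ 2 - 2 * δ * A * B + B ^ 2 := by nlinarith [sq_nonneg (A - δ * B)]
  have hCS : (1 - δ ^ 2) * (α * A + β * B) ^ 2
      ≤ (α ^ 2 + 2 * δ * α * β + β ^ 2) * (A ^ 2 - 2 * δ * A * B + B ^ 2) := by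
    -- Lagrange identity: the difference of the two sides is exactly this square
    nlinarith [sq_nonneg (α * B - β * A + δ * (β * B - α * A))]
  exact le_of_mul_le_mul_left (hCS.trans (mul_le_mul_of_nonneg_right hαβ hQ)) (by linarith)

section InnerProductSpace

variable {E : Type*} [NormedAddCommGroup E] [InnerProductSpace ℝ E]

theorem abs_inner_smul_smul_le {δ : ℝ} {v w : E} (h : |⟪v, w⟫_ℝ| ≤ δ * ‖v‖ * ‖w‖) (a b : ℝ) :
    |⟪a • v, b • w⟫_ℝ| ≤ δ * ‖a • v‖ * ‖b • w‖ := by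
  rw [real_inner_smul_left, real_inner_smul_right, abs_mul, abs_mul, norm_smul, norm_smul,
    Real.norm_eq_abs, Real.norm_eq_abs]
  calc |a| * (|b| * |⟪v, w⟫_ℝ|) ≤ |a| * (|b| * (δ * ‖v‖ * ‖w‖)) := by gcongr
    _ = δ * (|a| * ‖v‖) * (|b| * ‖w‖) := by ring

theorem add_mul_norm_le_norm_add {δ α β : ℝ} {a b : E} (hδ : |δ| < 1)
    (hab : |⟪a, b⟫_ℝ| ≤ δ * ‖a‖ * ‖b‖) (hαβ : α ^ 2 + 2 * δ * α * β + β ^ 2 ≤ 1 - δ ^ 2) :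
    α * ‖a‖ + β * ‖b‖ ≤ ‖a + b‖ := by
  have hgram : ‖a‖ ^ 2 - 2 * δ * ‖a‖ * ‖b‖ + ‖b‖ ^ 2 ≤ ‖a + b‖ ^ 2 := by
    rw [norm_add_sq_real]
    linarith [neg_abs_le ⟪a, b⟫_ℝ]
  exact (abs_le_of_sq_le_sq' ((sq_add_mul_le_quadratic_form hδ hαβ).trans hgram)
    (norm_nonneg _)).2

end InnerProductSpace

theorem sqrt_two_mul_one_sub_sq_le (δ : ℝ) : √(2 * (1 - δ ^ 2)) ≤ 7 / 4 := by
  rw [Real.sqrt_le_left (by norm_num)]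
  nlinarith

theorem sq_add_sqrt_le_one_sub_sq {δ : ℝ} (h0 : 0 ≤ δ) (h1 : δ ≤ 1) :
    ((1 - δ) / 4 + √(2 * (1 - δ ^ 2)) / 2) ^ 2 ≤ 1 - δ ^ 2 := by
  have hE := sqrt_two_mul_one_sub_sq_le δ
  have hE2 : √(2 * (1 - δ ^ 2)) ^ 2 = 2 * (1 - δ ^ 2) := Real.sq_sqrt (by nlinarith)
  nlinarith [mul_nonneg (sub_nonneg.2 h1) (sub_nonneg.2 hE)]

theorem sq_add_mul_sqrt_add_sq_le_one_sub_sq {δ : ℝ} (h0 : 0 ≤ δ) (h1 : δ ≤ 1) :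
    ((1 - δ) / 4) ^ 2 + 2 * δ * ((1 - δ) / 4) * (2 * (√(2 * (1 - δ ^ 2)) / (3 + δ)))
      + (2 * (√(2 * (1 - δ ^ 2)) / (3 + δ))) ^ 2 ≤ 1 - δ ^ 2 := by
  set E := √(2 * (1 - δ ^ 2))
  have hE := sqrt_two_mul_one_sub_sq_le δ
  have hE2 : E ^ 2 = 2 * (1 - δ ^ 2) := Real.sq_sqrt (by nlinarith)
  have h3 : 0 < 3 + δ := by linarith
  rw [← sub_nonneg]
  have hpoly : 0 ≤ (1 - δ ^ 2) * (3 + δ) ^ 2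
      - (((1 - δ) / 4) ^ 2 * (3 + δ) ^ 2 + δ * (1 - δ) * E * (3 + δ) + 4 * E ^ 2) := by
    nlinarith [mul_nonneg (mul_nonneg h0 (sub_nonneg.2 h1)) (sub_nonneg.2 hE)]
  have hdiv : 1 - δ ^ 2 - (((1 - δ) / 4) ^ 2 + 2 * δ * ((1 - δ) / 4) * (2 * (E / (3 + δ)))
      + (2 * (E / (3 + δ))) ^ 2) = ((1 - δ ^ 2) * (3 + δ) ^ 2
      - (((1 - δ) / 4) ^ 2 * (3 + δ) ^ 2 + δ * (1 - δ) * E * (3 + δ) + 4 * E ^ 2))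
      / (3 + δ) ^ 2 := by
    field_simp
    ring
  rw [hdiv]
  positivity

theorem sqrt_one_add_sq_le {t : ℝ} (ht : 1 ≤ |t|) : √(1 + t ^ 2) ≤ √2 * |t| := by
  rw [← Real.sqrt_sq (abs_nonneg t), ← Real.sqrt_mul (by norm_num), sq_abs]
  apply Real.sqrt_le_sqrt
  nlinarith [sq_abs t]

theorem rpow_mul_rpow_one_sub_le {p q M ν : ℝ} (hp : 0 ≤ p) (hq : 0 ≤ q) (hpM : p ≤ M)
    (hqM : q ≤ M) (hν0 : 0 ≤ ν) (hν1 : ν ≤ 1) : p ^ ν * q ^ (1 - ν) ≤ M := by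
  calc p ^ ν * q ^ (1 - ν) ≤ ν * p + (1 - ν) * q :=
        Real.geom_mean_le_arith_mean2_weighted hν0 (by linarith) hp hq (by ring)
    _ ≤ ν * M + (1 - ν) * M := by gcongr
    _ = M := by ring

theorem rpow_mul_rpow_one_sub_eq {a b V s ν : ℝ} (ha : 0 ≤ a) (hb : 0 ≤ b) (hV : 0 ≤ V)
    (hs : 0 < s) :
    a ^ ν * b ^ (1 - ν) * V ^ ν * s ^ (2 - ν) = (a * (s * V)) ^ ν * (b * s ^ 2) ^ (1 - ν) := by
  have hsplit : s ^ (2 - ν) = s ^ ν * (s ^ 2) ^ (1 - ν) := by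
    rw [← Real.rpow_two, ← Real.rpow_mul hs.le, ← Real.rpow_add hs]
    ring_nf
  rw [Real.mul_rpow ha (by positivity), Real.mul_rpow hs.le hV, Real.mul_rpow hb (by positivity),
    hsplit]
  ring

theorem stmt_2 (n : ℕ) (hn : 2 ≤ n)
    (v : EuclideanSpace ℝ (Fin n)) (hv : v ≠ 0)
    (e1 : EuclideanSpace ℝ (Fin n))
    (he1 : e1 = EuclideanSpace.single ⟨0, by omega⟩ (1 : ℝ))
    (δ : ℝ) (hδ : δ = |⟪v, e1⟫_ℝ| / ‖v‖) (hδ1 : δ < 1)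
    (lam : ℝ) (hlam : lam = (1 - δ) / (16 * Real.sqrt 2))
    (c1 c2 : ℝ) (hc1 : c1 = Real.sqrt (2 * (1 - δ ^ 2)) / 2)
    (hc2 : c2 = Real.sqrt (2 * (1 - δ ^ 2)) / (3 + δ))
    (t : ℝ) (ht : 1 ≤ |t|)
    (x : EuclideanSpace ℝ (Fin n))
    (hx : ‖x‖ ≤ 4 * lam * ‖v‖ * Real.sqrt (1 + t ^ 2))
    (ν : ℝ) (hν : ν ∈ Set.Icc (0 : ℝ) 1) :
    c1 ^ ν * c2 ^ (1 - ν) * ‖v‖ ^ ν * |t| ^ (2 - ν)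
      ≤ ‖x + t • v + (t ^ 2 / 2) • e1‖ := by
  subst hc1 hc2 hlam
  have hv0 : 0 < ‖v‖ := norm_pos_iff.2 hv
  have hδ0 : 0 ≤ δ := hδ ▸ by positivity
  have hδabs : |δ| < 1 := by rwa [abs_of_nonneg hδ0]
  have he1n : ‖e1‖ = 1 := by simp [he1]
  have hinner : |⟪t • v, (t ^ 2 / 2) • e1⟫_ℝ| ≤ δ * ‖t • v‖ * ‖(t ^ 2 / 2) • e1‖ :=
    abs_inner_smul_smul_le (by rw [hδ, he1n, div_mul_cancel₀ _ hv0.ne', mul_one]) _ _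
  have hI := add_mul_norm_le_norm_add (α := (1 - δ) / 4 + √(2 * (1 - δ ^ 2)) / 2) (β := 0)
    hδabs hinner (by linarith [sq_add_sqrt_le_one_sub_sq hδ0 hδ1.le])
  have hII := add_mul_norm_le_norm_add hδabs hinner
    (sq_add_mul_sqrt_add_sq_le_one_sub_sq hδ0 hδ1.le)
  have hnv : ‖t • v‖ = |t| * ‖v‖ := by rw [norm_smul, Real.norm_eq_abs]
  have hne : ‖(t ^ 2 / 2) • e1‖ = |t| ^ 2 / 2 := by
    rw [norm_smul, he1n, Real.norm_eq_abs, sq_abs, abs_of_nonneg (by positivity), mul_one]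
  have hx' : ‖x‖ ≤ (1 - δ) / 4 * (|t| * ‖v‖) := by
    have hδ' : 0 ≤ 1 - δ := by linarith
    calc ‖x‖ ≤ 4 * ((1 - δ) / (16 * √2)) * ‖v‖ * (√2 * |t|) :=
          hx.trans (mul_le_mul_of_nonneg_left (sqrt_one_add_sq_le ht) (by positivity))
      _ = (1 - δ) / 4 * (|t| * ‖v‖) := by field_simp; ring
  have htri := norm_le_add_norm_add' x (t • v + (t ^ 2 / 2) • e1)
  rw [← add_assoc] at htri
  rw [hnv, hne] at hI hII
  have h3 : 0 < 3 + δ := by linarith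
  rw [rpow_mul_rpow_one_sub_eq (by positivity) (by positivity) hv0.le (by linarith)]
  exact rpow_mul_rpow_one_sub_le (by positivity) (by positivity) (by linarith) (by linarith)
    hν.1 hν.2
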